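/- Game characterization of elementary equivalence: two pointed Kripke models (M,w) and (N,v) over a finite signature Δ are elementarily equivalent (they satisfy exactly the same sentences of the fragment L) if and only if Eloise has a winning strategy for the Ehrenfeucht-Fraïssé game starting with (M,w) and (N,v) on every finite gameboard tree with root Δ. -/

import Mathlib

/-- Actions over a set `R` of binary relation symbols. -/
inductive Act (R : Type) : Type
  | rel : R → Act R
  | union : Act R → Act R → Act R
  | comp : Act R → Act R → Act R
  | star : Act R → Act R

/-- A Kripke structure over relation symbols `R` and propositional symbols `P`,
with set of worlds `W` (interpretations of nominals are given separately). -/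
structure Kripke (R P W : Type) where
  rel : R → W → W → Prop
  val : W → P → Prop

/-- Interpretation of actions as accessibility relations. -/
def actRel {R P W : Type} (M : Kripke R P W) : Act R → W → W → Prop
  | .rel r => M.rel r
  | .union a b => fun w v => actRel M a w v ∨ actRel M b w v
  | .comp a b => fun w v => ∃ u, actRel M a w u ∧ actRel M b u v
  | .star a => Relation.ReflTransGen (actRel M a)

/-- Sentences of hybrid-dynamic propositional logic, indexed by the type `N` of
nominals (including variables); binders extend the nominal type by `Option`. -/
inductive Sen (R P : Type) : Type → Type 1
  | prop {N : Type} : P → Sen R P N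
  | nom {N : Type} : N → Sen R P N
  | conj {N : Type} (n : ℕ) : (Fin n → Sen R P N) → Sen R P N
  | neg {N : Type} : Sen R P N → Sen R P N
  | pos {N : Type} : Act R → Sen R P N → Sen R P N
  | at_ {N : Type} : N → Sen R P N → Sen R P N
  | store {N : Type} : Sen R P (Option N) → Sen R P N
  | ex {N : Type} : Sen R P (Option N) → Sen R P N

/-- Extend a nominal interpretation by interpreting the fresh variable as `w`. -/
def extOpt {N W : Type} (g : N → W) (w : W) : Option N → W :=
  fun o => o.elim w g

/-- Local satisfaction. -/
def sat {R P W : Type} (M : Kripke R P W) : {N : Type} → (N → W) → W → Sen R P N → Prop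
  | _, g, w, .prop p => M.val w p
  | _, g, w, .nom k => w = g k
  | _, g, w, .conj _ f => ∀ i, sat M g w (f i)
  | _, g, w, .neg φ => ¬ sat M g w φ
  | _, g, w, .pos a φ => ∃ v, actRel M a w v ∧ sat M g v φ
  | _, g, w, .at_ k φ => sat M g (g k) φ
  | _, g, w, .store φ => sat M (extOpt g w) w φ
  | _, g, w, .ex φ => ∃ u, sat M (extOpt g u) w φ
/-- The set of admitted sentence constructors `O ⊆ {◇, @, ↓, ∃}`. -/
structure Ops where
  dia : Bool
  at_ : Bool
  store : Bool
  ex : Bool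

mutual
/-- Gameboard trees: nodes labeled by signatures (here: the nominal type `N`),
edges labeled by sentence operators admitted by `O`. -/
inductive GTree (R P : Type) (O : Ops) : Type → Type 1
  | leaf {N : Type} : GTree R P O N
  | node {N : Type} : GForest R P O N → GTree R P O N

/-- A list of labeled edges leaving a node of a gameboard tree. -/
inductive GForest (R P : Type) (O : Ops) : Type → Type 1
  | nil {N : Type} : GForest R P O N
  | cons {N : Type} : GEdge R P O N → GForest R P O N → GForest R P O N

/-- A labeled edge of a gameboard tree together with its target subtree;
`↓`- and `∃`-edges extend the signature by a fresh variable. -/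
inductive GEdge (R P : Type) (O : Ops) : Type → Type 1
  | pos {N : Type} : O.dia = true → Act R → GTree R P O N → GEdge R P O N
  | at_ {N : Type} : O.at_ = true → N → GTree R P O N → GEdge R P O N
  | store {N : Type} : O.store = true → GTree R P O (Option N) → GEdge R P O N
  | ex {N : Type} : O.ex = true → GTree R P O (Option N) → GEdge R P O N
  | idle {N : Type} : GTree R P O N → GEdge R P O N
end

/-- Canonical finite conjunction of a list of sentences. -/
def conjList {R P N : Type} (l : List (Sen R P N)) : Sen R P N :=
  Sen.conj l.length fun i => l.get i

/-- Canonical finite disjunction of a list of sentences. -/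
def disjList {R P N : Type} (l : List (Sen R P N)) : Sen R P N :=
  Sen.neg (conjList (l.map Sen.neg))

/-- Necessity `[a]φ := ¬⟨a⟩¬φ`. -/
def necSen {R P N : Type} (a : Act R) (φ : Sen R P N) : Sen R P N :=
  Sen.neg (Sen.pos a (Sen.neg φ))

/-- Universal quantification `∀x.φ := ¬∃x.¬φ`. -/
def allSen {R P N : Type} (φ : Sen R P (Option N)) : Sen R P N :=
  Sen.neg (Sen.ex (Sen.neg φ))

/-- All sign assignments to the elements of a list. -/
def signings {α : Type} : List α → List (List (α × Bool))
  | [] => [[]]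
  | a :: l => (signings l).flatMap fun s => [(a, true) :: s, (a, false) :: s]

/-- A basic sentence: a nominal or a propositional symbol. -/
def basicSen {R P N : Type} : N ⊕ P → Sen R P N :=
  Sum.elim Sen.nom Sen.prop

/-- Game sentences at a leaf: all complete conjunctions of literals over the
basic sentences, given enumerations `eN`, `eP` of the (finite) signature. -/
def leafTheta {R P N : Type} (eP : List P) (eN : List N) : List (Sen R P N) :=
  (signings (eN.map Sum.inl ++ eP.map Sum.inr)).map fun s =>
    conjList (s.map fun bs =>
      if bs.2 then basicSen bs.1 else Sen.neg (basicSen bs.1))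

mutual
/-- The canonical list of game sentences `Θ_tr` over a gameboard tree. -/
def thetaT {R P : Type} {O : Ops} (eP : List P) :
    {N : Type} → List N → GTree R P O N → List (Sen R P N)
  | _, eN, .leaf => leafTheta eP eN
  | _, eN, .node F => (thetaF eP eN F).map conjList

/-- Lists of choices of game sentences, one per edge of a forest. -/
def thetaF {R P : Type} {O : Ops} (eP : List P) :
    {N : Type} → List N → GForest R P O N → List (List (Sen R P N))
  | _, _, .nil => [[]]
  | _, eN, .cons e F =>
      (thetaE eP eN e).flatMap fun φ => (thetaF eP eN F).map fun l => φ :: l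

/-- The possible game sentences contributed by a single labeled edge. -/
def thetaE {R P : Type} {O : Ops} (eP : List P) :
    {N : Type} → List N → GEdge R P O N → List (Sen R P N)
  | _, eN, .pos _ a t =>
      (thetaT eP eN t).sublists.map fun Γ =>
        conjList [conjList (Γ.map (Sen.pos a)), necSen a (disjList Γ)]
  | _, eN, .at_ _ k t => (thetaT eP eN t).map (Sen.at_ k)
  | _, eN, .store _ t => (thetaT eP (none :: eN.map some) t).map Sen.store
  | _, eN, .ex _ t =>
      (thetaT eP (none :: eN.map some) t).sublists.map fun Γ =>
        conjList [conjList (Γ.map Sen.ex), allSen (disjList Γ)]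
  | _, eN, .idle t => thetaT eP eN t
end

/-- The game property: the two current pointed models agree on all basic
sentences (nominals, including accumulated variables, and propositional symbols). -/
def Agree {R P W V Nn : Type} (M : Kripke R P W) (K : Kripke R P V)
    (g : Nn → W) (w : W) (h : Nn → V) (v : V) : Prop :=
  (∀ k : Nn, w = g k ↔ v = h k) ∧ (∀ p : P, M.val w p ↔ K.val v p)

mutual
/-- Eloise has a winning strategy for the EF game played on the gameboard tree,
starting from the pointed models `((M,g),w)` and `((K,h),v)`. -/
def EWinT {R P W V : Type} {O : Ops} (M : Kripke R P W) (K : Kripke R P V) :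
    {N : Type} → (N → W) → W → (N → V) → V → GTree R P O N → Prop
  | _, g, w, h, v, .leaf => Agree M K g w h v
  | _, g, w, h, v, .node F => Agree M K g w h v ∧ EWinF M K g w h v F

/-- Eloise can answer Abelard's moves along every edge of the forest. -/
def EWinF {R P W V : Type} {O : Ops} (M : Kripke R P W) (K : Kripke R P V) :
    {N : Type} → (N → W) → W → (N → V) → V → GForest R P O N → Prop
  | _, _, _, _, _, .nil => True
  | _, g, w, h, v, .cons e F => EWinE M K g w h v e ∧ EWinF M K g w h v F

/-- Eloise can answer Abelard's move along a single labeled edge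
(Abelard may move either of the two pointed models). -/
def EWinE {R P W V : Type} {O : Ops} (M : Kripke R P W) (K : Kripke R P V) :
    {N : Type} → (N → W) → W → (N → V) → V → GEdge R P O N → Prop
  | _, g, w, h, v, .pos _ a t =>
      (∀ w', actRel M a w w' → ∃ v', actRel K a v v' ∧ EWinT M K g w' h v' t) ∧
      (∀ v', actRel K a v v' → ∃ w', actRel M a w w' ∧ EWinT M K g w' h v' t)
  | _, g, _, h, _, .at_ _ k t => EWinT M K g (g k) h (h k) t
  | _, g, w, h, v, .store _ t => EWinT M K (extOpt g w) w (extOpt h v) v t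
  | _, g, w, h, v, .ex _ t =>
      (∀ w', ∃ v', EWinT M K (extOpt g w') w (extOpt h v') v t) ∧
      (∀ v', ∃ w', EWinT M K (extOpt g w') w (extOpt h v') v t)
  | _, g, w, h, v, .idle t => EWinT M K g w h v t
end

/-- The sentences of the fragment determined by the admitted operators `O`. -/
inductive InFrag {R P : Type} (O : Ops) : {N : Type} → Sen R P N → Prop
  | prop {N : Type} (p : P) : InFrag O (Sen.prop (N := N) p)
  | nom {N : Type} (k : N) : InFrag O (Sen.nom (R := R) (P := P) k)
  | conj {N : Type} {n : ℕ} {f : Fin n → Sen R P N} :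
      (∀ i, InFrag O (f i)) → InFrag O (Sen.conj n f)
  | neg {N : Type} {φ : Sen R P N} : InFrag O φ → InFrag O (Sen.neg φ)
  | pos {N : Type} {φ : Sen R P N} (a : Act R) :
      O.dia = true → InFrag O φ → InFrag O (Sen.pos a φ)
  | at_ {N : Type} {φ : Sen R P N} (k : N) :
      O.at_ = true → InFrag O φ → InFrag O (Sen.at_ k φ)
  | store {N : Type} {φ : Sen R P (Option N)} :
      O.store = true → InFrag O φ → InFrag O (Sen.store φ)
  | ex {N : Type} {φ : Sen R P (Option N)} :
      O.ex = true → InFrag O φ → InFrag O (Sen.ex φ)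

section AuxSat

open Classical

variable {R P W V : Type}

theorem sat_conjList {N : Type} (M : Kripke R P W) (g : N → W) (w : W)
    (l : List (Sen R P N)) :
    sat M g w (conjList l) ↔ ∀ φ ∈ l, sat M g w φ := by
  show (∀ i : Fin l.length, sat M g w (l.get i)) ↔ _
  constructor
  · intro H φ hφ
    obtain ⟨i, rfl⟩ := List.mem_iff_get.mp hφ
    exact H i
  · intro H i
    exact H _ (l.get_mem _)

theorem sat_disjList {N : Type} (M : Kripke R P W) (g : N → W) (w : W)
    (l : List (Sen R P N)) :
    sat M g w (disjList l) ↔ ∃ φ ∈ l, sat M g w φ := by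
  show ¬ sat M g w (conjList (l.map Sen.neg)) ↔ _
  rw [sat_conjList]
  constructor
  · intro H
    by_contra hc
    push_neg at hc
    apply H
    intro ψ hψ
    obtain ⟨φ, hφ, rfl⟩ := List.mem_map.mp hψ
    exact hc φ hφ
  · rintro ⟨φ, hφ, hs⟩ H
    exact H _ (List.mem_map_of_mem hφ) hs

theorem sat_necSen {N : Type} (M : Kripke R P W) (g : N → W) (w : W)
    (a : Act R) (φ : Sen R P N) :
    sat M g w (necSen a φ) ↔ ∀ w', actRel M a w w' → sat M g w' φ := by
  show ¬ (∃ v, actRel M a w v ∧ ¬ sat M g v φ) ↔ _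
  push_neg
  rfl

theorem sat_allSen {N : Type} (M : Kripke R P W) (g : N → W) (w : W)
    (φ : Sen R P (Option N)) :
    sat M g w (allSen φ) ↔ ∀ u, sat M (extOpt g u) w φ := by
  show ¬ (∃ u, ¬ sat M (extOpt g u) w φ) ↔ _
  push_neg
  rfl

end AuxSat
section AuxSign

theorem mem_signings_map {α : Type} (f : α → Bool) :
    ∀ l : List α, (l.map fun a => (a, f a)) ∈ signings l := by
  intro l
  induction l with
  | nil => simp [signings]
  | cons a l ih =>
    simp only [signings, List.mem_flatMap]
    refine ⟨l.map fun a => (a, f a), ih, ?_⟩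
    cases hfa : f a <;> simp [hfa]

theorem signings_exists_snd {α : Type} :
    ∀ (l : List α) (s : List (α × Bool)), s ∈ signings l → ∀ a ∈ l, ∃ b, (a, b) ∈ s := by
  intro l
  induction l with
  | nil => simp
  | cons a l ih =>
    intro s hs a' ha'
    simp only [signings, List.mem_flatMap, List.mem_cons, List.not_mem_nil, or_false] at hs
    obtain ⟨s', hs', h | h⟩ := hs <;> subst h <;>
    · rcases List.mem_cons.mp ha' with h | h
      · subst h; exact ⟨_, List.mem_cons_self⟩
      · obtain ⟨b, hb⟩ := ih s' hs' a' h
        exact ⟨b, List.mem_cons_of_mem _ hb⟩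

end AuxSign

section AuxFrag

variable {R P : Type} {O : Ops}

theorem inFrag_conjList {N : Type} {l : List (Sen R P N)}
    (h : ∀ φ ∈ l, InFrag O φ) : InFrag O (conjList l) :=
  InFrag.conj fun i => h _ (l.get_mem _)

theorem inFrag_disjList {N : Type} {l : List (Sen R P N)}
    (h : ∀ φ ∈ l, InFrag O φ) : InFrag O (disjList l) :=
  InFrag.neg (inFrag_conjList (by
    intro ψ hψ
    obtain ⟨φ, hφ, rfl⟩ := List.mem_map.mp hψ
    exact InFrag.neg (h φ hφ)))

theorem inFrag_necSen {N : Type} {a : Act R} {φ : Sen R P N}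
    (hd : O.dia = true) (h : InFrag O φ) : InFrag O (necSen a φ) :=
  InFrag.neg (InFrag.pos a hd (InFrag.neg h))

theorem inFrag_allSen {N : Type} {φ : Sen R P (Option N)}
    (he : O.ex = true) (h : InFrag O φ) : InFrag O (allSen φ) :=
  InFrag.neg (InFrag.ex he (InFrag.neg h))

theorem inFrag_basicSen {N : Type} (x : N ⊕ P) : InFrag O (basicSen (R := R) x) := by
  cases x with
  | inl k => exact InFrag.nom k
  | inr p => exact InFrag.prop p

theorem inFrag_leafTheta {N : Type} (eP : List P) (eN : List N) :
    ∀ θ ∈ leafTheta (R := R) eP eN, InFrag O θ := by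
  intro θ hθ
  obtain ⟨s, _, rfl⟩ := List.mem_map.mp hθ
  apply inFrag_conjList
  intro ψ hψ
  obtain ⟨bs, _, rfl⟩ := List.mem_map.mp hψ
  cases bs.2 <;> simp only [if_true, if_false, Bool.false_eq_true, reduceIte]
  · exact InFrag.neg (inFrag_basicSen _)
  · exact inFrag_basicSen _

end AuxFrag
section AuxLeaf

variable {R P W V : Type}

theorem leafTheta_exists (M : Kripke R P W) {N : Type} (eP : List P) (eN : List N)
    (g : N → W) (w : W) :
    ∃ θ ∈ leafTheta (R := R) eP eN, sat M g w θ := by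
  classical
  set l : List (N ⊕ P) := eN.map Sum.inl ++ eP.map Sum.inr with hl
  set f : N ⊕ P → Bool := fun x => decide (sat M g w (basicSen x)) with hf
  refine ⟨_, List.mem_map.mpr ⟨l.map fun a => (a, f a), mem_signings_map f l, rfl⟩, ?_⟩
  rw [sat_conjList]
  intro ψ hψ
  obtain ⟨bs, hbs, rfl⟩ := List.mem_map.mp hψ
  obtain ⟨a, _, rfl⟩ := List.mem_map.mp hbs
  by_cases hsat : sat M g w (basicSen a)
  · simpa [hf, hsat] using hsat
  · simpa [hf, hsat, sat] using hsat

theorem leafTheta_agree (M : Kripke R P W) (K : Kripke R P V) {N : Type}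
    (eP : List P) (hP : ∀ p : P, p ∈ eP) (eN : List N) (hN : ∀ k : N, k ∈ eN)
    (g : N → W) (w : W) (h : N → V) (v : V) (θ : Sen R P N)
    (hθ : θ ∈ leafTheta (R := R) eP eN)
    (hM : sat M g w θ) (hK : sat K h v θ) : Agree M K g w h v := by
  obtain ⟨s, hs, rfl⟩ := List.mem_map.mp hθ
  rw [sat_conjList] at hM hK
  have key : ∀ x : N ⊕ P, x ∈ eN.map Sum.inl ++ eP.map Sum.inr →
      (sat M g w (basicSen x) ↔ sat K h v (basicSen x)) := by
    intro x hx
    obtain ⟨b, hb⟩ := signings_exists_snd _ s hs x hx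
    have hmem : (if b then basicSen (R := R) (P := P) x else Sen.neg (basicSen x)) ∈
        s.map fun bs => if bs.2 then basicSen bs.1 else Sen.neg (basicSen bs.1) :=
      List.mem_map.mpr ⟨(x, b), hb, rfl⟩
    have h1 := hM _ hmem
    have h2 := hK _ hmem
    cases b with
    | true => simp only [if_true] at h1 h2; exact iff_of_true h1 h2
    | false =>
      simp only [Bool.false_eq_true, if_false] at h1 h2
      exact iff_of_false h1 h2
  constructor
  · intro k
    exact key (Sum.inl k) (List.mem_append_left _ (List.mem_map_of_mem (hN k)))
  · intro p
    exact key (Sum.inr p) (List.mem_append_right _ (List.mem_map_of_mem (hP p)))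

end AuxLeaf
section AuxThetaFrag

variable {R P : Type} {O : Ops}

mutual
theorem thetaT_inFrag (eP : List P) : {N : Type} → (eN : List N) → (t : GTree R P O N) →
    ∀ θ ∈ thetaT eP eN t, InFrag O θ
  | _, eN, .leaf => inFrag_leafTheta eP eN
  | _, eN, .node F => by
    intro θ hθ
    obtain ⟨l, hl, rfl⟩ := List.mem_map.mp hθ
    exact inFrag_conjList fun φ hφ => thetaF_inFrag eP eN F l hl φ hφ

theorem thetaF_inFrag (eP : List P) : {N : Type} → (eN : List N) → (F : GForest R P O N) →
    ∀ l ∈ thetaF eP eN F, ∀ φ ∈ l, InFrag O φ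
  | _, _, .nil => by simp [thetaF]
  | _, eN, .cons e F => by
    intro l hl
    simp only [thetaF, List.mem_flatMap, List.mem_map] at hl
    obtain ⟨φ, hφ, l', hl', rfl⟩ := hl
    intro ψ hψ
    rcases List.mem_cons.mp hψ with h | h
    · subst h; exact thetaE_inFrag eP eN e _ hφ
    · exact thetaF_inFrag eP eN F l' hl' ψ h

theorem thetaE_inFrag (eP : List P) : {N : Type} → (eN : List N) → (e : GEdge R P O N) →
    ∀ φ ∈ thetaE eP eN e, InFrag O φ
  | _, eN, .pos hd a t => by
    intro φ hφ
    simp only [thetaE, List.mem_map, List.mem_sublists] at hφ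
    obtain ⟨Γ, hΓ, rfl⟩ := hφ
    have hΓ' : ∀ θ ∈ Γ, InFrag O θ := fun θ hθ =>
      thetaT_inFrag eP eN t θ (hΓ.subset hθ)
    apply inFrag_conjList
    intro ψ hψ
    simp only [List.mem_cons, List.not_mem_nil, or_false] at hψ
    rcases hψ with h | h <;> subst h
    · exact inFrag_conjList fun ψ hψ => by
        obtain ⟨θ, hθ, rfl⟩ := List.mem_map.mp hψ
        exact InFrag.pos a hd (hΓ' θ hθ)
    · exact inFrag_necSen hd (inFrag_disjList hΓ')
  | _, eN, .at_ ha k t => by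
    intro φ hφ
    obtain ⟨θ, hθ, rfl⟩ := List.mem_map.mp hφ
    exact InFrag.at_ k ha (thetaT_inFrag eP eN t θ hθ)
  | _, eN, .store hs t => by
    intro φ hφ
    obtain ⟨θ, hθ, rfl⟩ := List.mem_map.mp hφ
    exact InFrag.store hs (thetaT_inFrag eP _ t θ hθ)
  | _, eN, .ex he t => by
    intro φ hφ
    simp only [thetaE, List.mem_map, List.mem_sublists] at hφ
    obtain ⟨Γ, hΓ, rfl⟩ := hφ
    have hΓ' : ∀ θ ∈ Γ, InFrag O θ := fun θ hθ =>
      thetaT_inFrag eP _ t θ (hΓ.subset hθ)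
    apply inFrag_conjList
    intro ψ hψ
    simp only [List.mem_cons, List.not_mem_nil, or_false] at hψ
    rcases hψ with h | h <;> subst h
    · exact inFrag_conjList fun ψ hψ => by
        obtain ⟨θ, hθ, rfl⟩ := List.mem_map.mp hψ
        exact InFrag.ex he (hΓ' θ hθ)
    · exact inFrag_allSen he (inFrag_disjList hΓ')
  | _, eN, .idle t => thetaT_inFrag eP eN t
end

end AuxThetaFrag
section AuxExists

open Classical

variable {R P W : Type} {O : Ops}

mutual
theorem thetaT_exists (M : Kripke R P W) (eP : List P) :
    {N : Type} → (eN : List N) → (t : GTree R P O N) → (g : N → W) → (w : W) →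
    ∃ θ ∈ thetaT eP eN t, sat M g w θ
  | _, eN, .leaf, g, w => leafTheta_exists M eP eN g w
  | _, eN, .node F, g, w => by
    obtain ⟨l, hl, hsat⟩ := thetaF_exists M eP eN F g w
    exact ⟨conjList l, List.mem_map_of_mem hl, (sat_conjList M g w l).mpr hsat⟩

theorem thetaF_exists (M : Kripke R P W) (eP : List P) :
    {N : Type} → (eN : List N) → (F : GForest R P O N) → (g : N → W) → (w : W) →
    ∃ l ∈ thetaF eP eN F, ∀ φ ∈ l, sat M g w φ
  | _, eN, .nil, g, w => by simp [thetaF]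
  | _, eN, .cons e F, g, w => by
    obtain ⟨φ, hφ, hsφ⟩ := thetaE_exists M eP eN e g w
    obtain ⟨l, hl, hsl⟩ := thetaF_exists M eP eN F g w
    refine ⟨φ :: l, ?_, ?_⟩
    · simp only [thetaF, List.mem_flatMap, List.mem_map]
      exact ⟨φ, hφ, l, hl, rfl⟩
    · intro ψ hψ
      rcases List.mem_cons.mp hψ with h | h
      · subst h; exact hsφ
      · exact hsl ψ h

theorem thetaE_exists (M : Kripke R P W) (eP : List P) :
    {N : Type} → (eN : List N) → (e : GEdge R P O N) → (g : N → W) → (w : W) →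
    ∃ φ ∈ thetaE eP eN e, sat M g w φ
  | _, eN, .pos hd a t, g, w => by
    classical
    set Γ : List (Sen R P _) := (thetaT eP eN t).filter
      (fun θ => decide (∃ w', actRel M a w w' ∧ sat M g w' θ)) with hΓ
    refine ⟨_, List.mem_map.mpr ⟨Γ, List.mem_sublists.mpr (List.filter_sublist), rfl⟩, ?_⟩
    rw [sat_conjList]
    intro ψ hψ
    simp only [List.mem_cons, List.not_mem_nil, or_false] at hψ
    rcases hψ with h | h <;> subst h
    · rw [sat_conjList]
      intro ψ hψ
      obtain ⟨θ, hθ, rfl⟩ := List.mem_map.mp hψ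
      have := (List.mem_filter.mp hθ).2
      exact of_decide_eq_true this
    · rw [sat_necSen]
      intro w' hww'
      rw [sat_disjList]
      obtain ⟨θ, hθ, hsθ⟩ := thetaT_exists M eP eN t g w'
      refine ⟨θ, List.mem_filter.mpr ⟨hθ, decide_eq_true ⟨w', hww', hsθ⟩⟩, hsθ⟩
  | _, eN, .at_ ha k t, g, w => by
    obtain ⟨θ, hθ, hsθ⟩ := thetaT_exists M eP eN t g (g k)
    exact ⟨Sen.at_ k θ, List.mem_map_of_mem hθ, hsθ⟩
  | _, eN, .store hs t, g, w => by
    obtain ⟨θ, hθ, hsθ⟩ := thetaT_exists M eP (none :: eN.map some) t (extOpt g w) w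
    exact ⟨Sen.store θ, List.mem_map_of_mem hθ, hsθ⟩
  | _, eN, .ex he t, g, w => by
    classical
    set Γ : List (Sen R P _) := (thetaT eP (none :: eN.map some) t).filter
      (fun θ => decide (∃ u, sat M (extOpt g u) w θ)) with hΓ
    refine ⟨_, List.mem_map.mpr ⟨Γ, List.mem_sublists.mpr (List.filter_sublist), rfl⟩, ?_⟩
    rw [sat_conjList]
    intro ψ hψ
    simp only [List.mem_cons, List.not_mem_nil, or_false] at hψ
    rcases hψ with h | h <;> subst h
    · rw [sat_conjList]
      intro ψ hψ
      obtain ⟨θ, hθ, rfl⟩ := List.mem_map.mp hψ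
      have := (List.mem_filter.mp hθ).2
      exact of_decide_eq_true this
    · rw [sat_allSen]
      intro u
      rw [sat_disjList]
      obtain ⟨θ, hθ, hsθ⟩ := thetaT_exists M eP (none :: eN.map some) t (extOpt g u) w
      refine ⟨θ, List.mem_filter.mpr ⟨hθ, decide_eq_true ⟨u, hsθ⟩⟩, hsθ⟩
  | _, eN, .idle t, g, w => thetaT_exists M eP eN t g w
end

end AuxExists
section AuxStar

variable {R P W V : Type} {O : Ops}

mutual
/-- Add an idle-to-leaf edge at every node, forcing basic agreement. -/
def starT : {N : Type} → GTree R P O N → GTree R P O N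
  | _, .leaf => .leaf
  | _, .node F => .node (.cons (.idle .leaf) (starF F))

def starF : {N : Type} → GForest R P O N → GForest R P O N
  | _, .nil => .nil
  | _, .cons e F => .cons (starE e) (starF F)

def starE : {N : Type} → GEdge R P O N → GEdge R P O N
  | _, .pos hd a t => .pos hd a (starT t)
  | _, .at_ ha k t => .at_ ha k (starT t)
  | _, .store hs t => .store hs (starT t)
  | _, .ex he t => .ex he (starT t)
  | _, .idle t => .idle (starT t)
end

mutual
theorem winT_of_theta (M : Kripke R P W) (K : Kripke R P V)
    (eP : List P) (hP : ∀ p : P, p ∈ eP) :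
    {N : Type} → (eN : List N) → (hN : ∀ k : N, k ∈ eN) → (t : GTree R P O N) →
    (g : N → W) → (w : W) → (h : N → V) → (v : V) → (θ : Sen R P N) →
    θ ∈ thetaT eP eN (starT t) → sat M g w θ → sat K h v θ →
    EWinT M K g w h v t
  | _, eN, hN, .leaf, g, w, h, v, θ, hθ, hM, hK => by
    exact leafTheta_agree M K eP hP eN hN g w h v θ hθ hM hK
  | _, eN, hN, .node F, g, w, h, v, θ, hθ, hM, hK => by
    simp only [starT, thetaT, List.mem_map] at hθ
    obtain ⟨l, hl, rfl⟩ := hθ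
    simp only [thetaF, thetaE, List.mem_flatMap, List.mem_map] at hl
    obtain ⟨φ0, hφ0, l', hl', rfl⟩ := hl
    rw [sat_conjList] at hM hK
    constructor
    · exact leafTheta_agree M K eP hP eN hN g w h v φ0 hφ0
        (hM _ (List.mem_cons_self)) (hK _ (List.mem_cons_self))
    · exact winF_of_theta M K eP hP eN hN F g w h v l' hl'
        (fun ψ hψ => hM _ (List.mem_cons_of_mem _ hψ))
        (fun ψ hψ => hK _ (List.mem_cons_of_mem _ hψ))

theorem winF_of_theta (M : Kripke R P W) (K : Kripke R P V)
    (eP : List P) (hP : ∀ p : P, p ∈ eP) :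
    {N : Type} → (eN : List N) → (hN : ∀ k : N, k ∈ eN) → (F : GForest R P O N) →
    (g : N → W) → (w : W) → (h : N → V) → (v : V) → (l : List (Sen R P N)) →
    l ∈ thetaF eP eN (starF F) → (∀ φ ∈ l, sat M g w φ) → (∀ φ ∈ l, sat K h v φ) →
    EWinF M K g w h v F
  | _, eN, hN, .nil, g, w, h, v, l, hl, hM, hK => trivial
  | _, eN, hN, .cons e F, g, w, h, v, l, hl, hM, hK => by
    simp only [starF, thetaF, List.mem_flatMap, List.mem_map] at hl
    obtain ⟨φ, hφ, l', hl', rfl⟩ := hl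
    constructor
    · exact winE_of_theta M K eP hP eN hN e g w h v φ hφ
        (hM _ (List.mem_cons_self)) (hK _ (List.mem_cons_self))
    · exact winF_of_theta M K eP hP eN hN F g w h v l' hl'
        (fun ψ hψ => hM _ (List.mem_cons_of_mem _ hψ))
        (fun ψ hψ => hK _ (List.mem_cons_of_mem _ hψ))

theorem winE_of_theta (M : Kripke R P W) (K : Kripke R P V)
    (eP : List P) (hP : ∀ p : P, p ∈ eP) :
    {N : Type} → (eN : List N) → (hN : ∀ k : N, k ∈ eN) → (e : GEdge R P O N) →
    (g : N → W) → (w : W) → (h : N → V) → (v : V) → (φ : Sen R P N) →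
    φ ∈ thetaE eP eN (starE e) → sat M g w φ → sat K h v φ →
    EWinE M K g w h v e
  | _, eN, hN, .pos hd a t, g, w, h, v, φ, hφ, hM, hK => by
    simp only [starE, thetaE, List.mem_map, List.mem_sublists] at hφ
    obtain ⟨Γ, hΓ, rfl⟩ := hφ
    rw [sat_conjList] at hM hK
    have hMp := hM _ (List.mem_cons_self)
    have hMn := hM _ (List.mem_cons_of_mem _ (List.mem_cons_self))
    have hKp := hK _ (List.mem_cons_self)
    have hKn := hK _ (List.mem_cons_of_mem _ (List.mem_cons_self))
    rw [sat_conjList] at hMp hKp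
    rw [sat_necSen] at hMn hKn
    constructor
    · intro w' hww'
      have := (sat_disjList M g w' Γ).mp (hMn w' hww')
      obtain ⟨θ, hθΓ, hsθM⟩ := this
      have := hKp _ (List.mem_map_of_mem hθΓ)
      obtain ⟨v', hvv', hsθK⟩ := this
      exact ⟨v', hvv', winT_of_theta M K eP hP eN hN t g w' h v' θ (hΓ.subset hθΓ) hsθM hsθK⟩
    · intro v' hvv'
      have := (sat_disjList K h v' Γ).mp (hKn v' hvv')
      obtain ⟨θ, hθΓ, hsθK⟩ := this
      have := hMp _ (List.mem_map_of_mem hθΓ)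
      obtain ⟨w', hww', hsθM⟩ := this
      exact ⟨w', hww', winT_of_theta M K eP hP eN hN t g w' h v' θ (hΓ.subset hθΓ) hsθM hsθK⟩
  | _, eN, hN, .at_ ha k t, g, w, h, v, φ, hφ, hM, hK => by
    obtain ⟨θ, hθ, rfl⟩ := List.mem_map.mp hφ
    exact winT_of_theta M K eP hP eN hN t g (g k) h (h k) θ hθ hM hK
  | _, eN, hN, .store hs t, g, w, h, v, φ, hφ, hM, hK => by
    obtain ⟨θ, hθ, rfl⟩ := List.mem_map.mp hφ
    refine winT_of_theta M K eP hP (none :: eN.map some) ?_ t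
      (extOpt g w) w (extOpt h v) v θ hθ hM hK
    intro k
    cases k with
    | none => exact List.mem_cons_self
    | some k => exact List.mem_cons_of_mem _ (List.mem_map_of_mem (hN k))
  | _, eN, hN, .ex he t, g, w, h, v, φ, hφ, hM, hK => by
    simp only [starE, thetaE, List.mem_map, List.mem_sublists] at hφ
    obtain ⟨Γ, hΓ, rfl⟩ := hφ
    rw [sat_conjList] at hM hK
    have hMp := hM _ (List.mem_cons_self)
    have hMn := hM _ (List.mem_cons_of_mem _ (List.mem_cons_self))
    have hKp := hK _ (List.mem_cons_self)
    have hKn := hK _ (List.mem_cons_of_mem _ (List.mem_cons_self))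
    rw [sat_conjList] at hMp hKp
    rw [sat_allSen] at hMn hKn
    have hN' : ∀ k : Option _, k ∈ none :: eN.map some := by
      intro k
      cases k with
      | none => exact List.mem_cons_self
      | some k => exact List.mem_cons_of_mem _ (List.mem_map_of_mem (hN k))
    constructor
    · intro w'
      obtain ⟨θ, hθΓ, hsθM⟩ := (sat_disjList M (extOpt g w') w Γ).mp (hMn w')
      obtain ⟨v', hsθK⟩ := hKp _ (List.mem_map_of_mem hθΓ)
      exact ⟨v', winT_of_theta M K eP hP _ hN' t (extOpt g w') w (extOpt h v') v θ
        (hΓ.subset hθΓ) hsθM hsθK⟩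
    · intro v'
      obtain ⟨θ, hθΓ, hsθK⟩ := (sat_disjList K (extOpt h v') v Γ).mp (hKn v')
      obtain ⟨w', hsθM⟩ := hMp _ (List.mem_map_of_mem hθΓ)
      exact ⟨w', winT_of_theta M K eP hP _ hN' t (extOpt g w') w (extOpt h v') v θ
        (hΓ.subset hθΓ) hsθM hsθK⟩
  | _, eN, hN, .idle t, g, w, h, v, φ, hφ, hM, hK =>
    winT_of_theta M K eP hP eN hN t g w h v φ hφ hM hK
end

end AuxStar
section AuxTreeOf

variable {R P W V : Type}

/-- A forest of edges indexed by `Fin n`. -/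
def forestOfFin {O : Ops} {N : Type} : {n : ℕ} → (Fin n → GEdge R P O N) → GForest R P O N
  | 0, _ => .nil
  | _ + 1, f => .cons (f 0) (forestOfFin fun i => f i.succ)

/-- The gameboard tree needed to test a single sentence. -/
def treeOf (O : Ops) : {N : Type} → Sen R P N → GTree R P O N
  | _, .prop _ => .leaf
  | _, .nom _ => .leaf
  | _, .conj _ f => .node (forestOfFin fun i => .idle (treeOf O (f i)))
  | _, .neg φ => treeOf O φ
  | _, .pos a φ =>
      if h : O.dia = true then .node (.cons (.pos h a (treeOf O φ)) .nil) else .leaf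
  | _, .at_ k φ =>
      if h : O.at_ = true then .node (.cons (.at_ h k (treeOf O φ)) .nil) else .leaf
  | _, .store φ =>
      if h : O.store = true then .node (.cons (.store h (treeOf O φ)) .nil) else .leaf
  | _, .ex φ =>
      if h : O.ex = true then .node (.cons (.ex h (treeOf O φ)) .nil) else .leaf

theorem ewinF_forestOfFin {O : Ops} (M : Kripke R P W) (K : Kripke R P V) {N : Type}
    (g : N → W) (w : W) (h : N → V) (v : V) :
    ∀ {n : ℕ} (f : Fin n → GEdge R P O N),
      EWinF M K g w h v (forestOfFin f) ↔ ∀ i, EWinE M K g w h v (f i) := by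
  intro n
  induction n with
  | zero => intro f; simp [forestOfFin, EWinF]
  | succ n ih =>
    intro f
    simp only [forestOfFin, EWinF, ih, Fin.forall_fin_succ]

theorem sat_iff_of_winT {O : Ops} (M : Kripke R P W) (K : Kripke R P V)
    {N : Type} {φ : Sen R P N} (hφ : InFrag O φ) :
    ∀ (g : N → W) (w : W) (h : N → V) (v : V),
      EWinT M K g w h v (treeOf O φ) → (sat M g w φ ↔ sat K h v φ) := by
  induction hφ with
  | prop p =>
    intro g w h v hw
    exact hw.2 p
  | nom k =>
    intro g w h v hw
    exact hw.1 k
  | conj hf ih =>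
    intro g w h v hw
    rw [treeOf] at hw
    obtain ⟨-, hwF⟩ := hw
    rw [ewinF_forestOfFin] at hwF
    show (∀ i, sat M g w _) ↔ (∀ i, sat K h v _)
    exact forall_congr' fun i => ih i g w h v (hwF i)
  | neg hφ ih =>
    intro g w h v hw
    rw [treeOf] at hw
    exact not_congr (ih g w h v hw)
  | pos a hd hφ ih =>
    intro g w h v hw
    rw [treeOf, dif_pos hd] at hw
    obtain ⟨-, ⟨hMK, hKM⟩, -⟩ := hw
    constructor
    · rintro ⟨w', hww', hs⟩
      obtain ⟨v', hvv', hwin⟩ := hMK w' hww'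
      exact ⟨v', hvv', (ih g w' h v' hwin).mp hs⟩
    · rintro ⟨v', hvv', hs⟩
      obtain ⟨w', hww', hwin⟩ := hKM v' hvv'
      exact ⟨w', hww', (ih g w' h v' hwin).mpr hs⟩
  | at_ k ha hφ ih =>
    intro g w h v hw
    rw [treeOf, dif_pos ha] at hw
    obtain ⟨-, hwin, -⟩ := hw
    exact ih g (g k) h (h k) hwin
  | store hs hφ ih =>
    intro g w h v hw
    rw [treeOf, dif_pos hs] at hw
    obtain ⟨-, hwin, -⟩ := hw
    exact ih (extOpt g w) w (extOpt h v) v hwin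
  | ex he hφ ih =>
    intro g w h v hw
    rw [treeOf, dif_pos he] at hw
    obtain ⟨-, ⟨hMK, hKM⟩, -⟩ := hw
    constructor
    · rintro ⟨u, hs⟩
      obtain ⟨u', hwin⟩ := hMK u
      exact ⟨u', (ih (extOpt g u) w (extOpt h u') v hwin).mp hs⟩
    · rintro ⟨u, hs⟩
      obtain ⟨u', hwin⟩ := hKM u
      exact ⟨u', (ih (extOpt g u') w (extOpt h u) v hwin).mpr hs⟩

end AuxTreeOf
/-- game characterization of elementary equivalence: over a finite
signature, two pointed models satisfy the same sentences of the fragment iff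
Eloise has a winning strategy for the EF game on every gameboard tree rooted at
that signature. -/
theorem elem_equiv_iff_ewin_all_trees {R P N W V : Type} {O : Ops}
    [Finite N] [Finite P] [Finite R]
    (M : Kripke R P W) (K : Kripke R P V)
    (g : N → W) (w : W) (h : N → V) (v : V) :
    (∀ φ : Sen R P N, InFrag O φ → (sat M g w φ ↔ sat K h v φ)) ↔
      (∀ tr : GTree R P O N, EWinT M K g w h v tr) := by
  constructor
  · intro H tr
    haveI := Fintype.ofFinite N
    haveI := Fintype.ofFinite P
    set eN : List N := Finset.univ.toList with heN
    set eP : List P := Finset.univ.toList with heP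
    have hN : ∀ k : N, k ∈ eN := fun k => Finset.mem_toList.mpr (Finset.mem_univ k)
    have hP : ∀ p : P, p ∈ eP := fun p => Finset.mem_toList.mpr (Finset.mem_univ p)
    obtain ⟨θ, hθ, hsM⟩ := thetaT_exists M eP eN (starT tr) g w
    have hfrag := thetaT_inFrag eP eN (starT tr) θ hθ
    have hsK := (H θ hfrag).mp hsM
    exact winT_of_theta M K eP hP eN hN tr g w h v θ hθ hsM hsK
  · intro H φ hφ
    exact sat_iff_of_winT M K hφ g w h v (H (treeOf O φ))
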